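/- Let G be a (2r+1)-regular multigraph with p cut-edges, let k be a positive integer, and let S, T be disjoint subsets of V(G) with R = V(G) − S − T, satisfying q(S,T) ≥ d_{G−S}(T) + 2k(|S| − |T|) + 2, where q(S,T) is the number of components Q of G−S−T with ‖V(Q),T‖ odd. Then ‖R,S‖ ≥ 3 − p + d_{G−S}(T) + 3k(|S| − |T|). -/

import Mathlib

open scoped Classical
noncomputable section

structure Multigraph (V : Type) (E : Type) where
  inc : E → Sym2 V

namespace Multigraph

variable {V E : Type}

/-- The number of times vertex `v` occurs as an endpoint of the unordered pair `s`
(a loop at `v` counts twice). -/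
def endCount (v : V) (s : Sym2 V) : ℕ :=
  Sym2.lift ⟨fun a b => (if a = v then 1 else 0) + (if b = v then 1 else 0),
    fun _ _ => add_comm _ _⟩ s

/-- The degree of a vertex in a multigraph (a loop contributes 2). -/
def degree [Fintype E] (G : Multigraph V E) (v : V) : ℕ :=
  ∑ e : E, endCount v (G.inc e)

/-- `G` has a spanning `ℓ`-regular subgraph (a set of edges giving each vertex degree `ℓ`). -/
def HasFactor [Fintype E] (G : Multigraph V E) (ℓ : ℕ) : Prop :=
  ∃ F : Finset E, ∀ v : V, ∑ e ∈ F, endCount v (G.inc e) = ℓ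

/-- One step along an edge not in `A`. -/
def Step (G : Multigraph V E) (A : Set E) (x y : V) : Prop :=
  ∃ e : E, e ∉ A ∧ G.inc e = s(x, y)

/-- The number of connected components of `G` after deleting the edges in `A`. -/
def numComponents (G : Multigraph V E) (A : Set E) : ℕ :=
  Nat.card (Quot (G.Step A))

/-- An edge is a cut-edge if deleting it increases the number of components. -/
def IsCutEdge (G : Multigraph V E) (e : E) : Prop :=
  G.numComponents ∅ < G.numComponents {e}

/-- The number of cut-edges of `G`. -/
def cutEdgeCount (G : Multigraph V E) : ℕ :=
  Nat.card {e : E // G.IsCutEdge e}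

/-- `‖A,B‖`: the number of edges with one endpoint in `A` and the other in `B`
(for disjoint `A` and `B`). -/
def edgesBetween (G : Multigraph V E) (A B : Set V) : ℕ :=
  Nat.card {e : E // ∃ a ∈ A, ∃ b ∈ B, G.inc e = s(a, b)}

/-- The degree of `v` in `G − S` (only edges with no endpoint in `S` count). -/
def degreeAvoid [Fintype E] (G : Multigraph V E) (S : Set V) (v : V) : ℕ :=
  ∑ e : E, if ∀ u ∈ S, ¬ u ∈ G.inc e then endCount v (G.inc e) else 0

/-- `d_{G−S}(T)`: the sum over `v ∈ T` of the degree of `v` in `G − S`. -/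
def degSumAvoid [Fintype V] [Fintype E] (G : Multigraph V E) (S T : Set V) : ℕ :=
  ∑ v : V, if v ∈ T then G.degreeAvoid S v else 0

/-- One step inside the vertex set `R`. -/
def StepIn (G : Multigraph V E) (R : Set V) (x y : V) : Prop :=
  x ∈ R ∧ y ∈ R ∧ ∃ e : E, G.inc e = s(x, y)

/-- Reachability within the vertex set `R`. -/
def ReachIn (G : Multigraph V E) (R : Set V) : V → V → Prop :=
  Relation.ReflTransGen (G.StepIn R)

/-- The component of `v` in the submultigraph induced by `R`. -/
def componentIn (G : Multigraph V E) (R : Set V) (v : V) : Set V :=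
  {w | G.ReachIn R v w}

/-- `C` is (the vertex set of) a component of the submultigraph induced by `R`. -/
def IsCompOf (G : Multigraph V E) (R : Set V) (C : Set V) : Prop :=
  ∃ v ∈ R, C = G.componentIn R v

/-- `q(S,T)`: the number of components `Q` of `G − S − T` with `‖V(Q),T‖` odd. -/
def oddComps (G : Multigraph V E) (S T : Set V) : ℕ :=
  Nat.card {C : Set V // G.IsCompOf ((S ∪ T)ᶜ) C ∧ Odd (G.edgesBetween C T)}

end Multigraph

/-!
Call an odd component `C` of `G − S − T` pendant if it sends no edge to `S` and exactly one
edge to `T`; that edge is then a cut-edge. Every other odd component sends an edge to `S` or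
at least three edges to `T`, so `3 ≤ 2‖C,S‖ + 2·[C pendant] + ‖C,T‖` for every odd `C`.
Components of `G − S − T` have disjoint sets of edges to `S` and to `T`, so summing gives
`3 q(S,T) ≤ 2‖R,S‖ + 2p + d_{G−S}(T)`, and three times the hypothesis on `q(S,T)` turns this
into the claimed bound.
-/

lemma three_le_of_odd {s t : ℕ} (ht : Odd t) :
    3 ≤ 2 * s + 2 * (if s = 0 ∧ t = 1 then 1 else 0) + t := by
  obtain ⟨m, rfl⟩ := ht
  split_ifs <;> omega

namespace Multigraph

variable {V E : Type}

section Components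

variable {G : Multigraph V E} {R C C₁ C₂ : Set V}

instance : Std.Symm (G.StepIn R) :=
  ⟨fun _ _ ⟨hx, hy, e, he⟩ => ⟨hy, hx, e, he.trans Sym2.eq_swap⟩⟩

lemma reachIn_symm {x y : V} (h : G.ReachIn R x y) : G.ReachIn R y x :=
  Relation.ReflTransGen.stdSymm.symm _ _ h

lemma componentIn_subset {v : V} (hv : v ∈ R) : G.componentIn R v ⊆ R := by
  intro w hw
  induction hw with
  | refl => exact hv
  | tail _ h _ => exact h.2.1

lemma IsCompOf.subset (h : G.IsCompOf R C) : C ⊆ R := by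
  obtain ⟨v, hv, rfl⟩ := h
  exact componentIn_subset hv

lemma IsCompOf.mem_of_inc (h : G.IsCompOf R C) {x y : V} {e : E} (hx : x ∈ C)
    (he : G.inc e = s(x, y)) (hy : y ∈ R) : y ∈ C := by
  obtain ⟨v, hv, rfl⟩ := h
  exact Relation.ReflTransGen.tail hx ⟨componentIn_subset hv hx, hy, e, he⟩

lemma IsCompOf.eq_of_mem (h₁ : G.IsCompOf R C₁) (h₂ : G.IsCompOf R C₂) {w : V}
    (hw₁ : w ∈ C₁) (hw₂ : w ∈ C₂) : C₁ = C₂ := by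
  obtain ⟨v₁, -, rfl⟩ := h₁
  obtain ⟨v₂, -, rfl⟩ := h₂
  ext u
  exact ⟨fun hu => hw₂.trans ((reachIn_symm hw₁).trans hu),
    fun hu => hw₁.trans ((reachIn_symm hw₂).trans hu)⟩

end Components

section EdgeCounting

variable [Fintype E] (G : Multigraph V E)

def edgesBetweenFinset (A B : Set V) : Finset E :=
  Finset.univ.filter fun e => ∃ a ∈ A, ∃ b ∈ B, G.inc e = s(a, b)

variable {G}

@[simp]
lemma mem_edgesBetweenFinset {A B : Set V} {e : E} :
    e ∈ G.edgesBetweenFinset A B ↔ ∃ a ∈ A, ∃ b ∈ B, G.inc e = s(a, b) := by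
  simp [edgesBetweenFinset]

lemma card_edgesBetweenFinset (A B : Set V) :
    (G.edgesBetweenFinset A B).card = G.edgesBetween A B := by
  rw [edgesBetween, Nat.card_eq_fintype_card, Fintype.card_subtype, edgesBetweenFinset]

lemma edgesBetweenFinset_mono_left {A A' B : Set V} (h : A ⊆ A') :
    G.edgesBetweenFinset A B ⊆ G.edgesBetweenFinset A' B := by
  intro e
  simp only [mem_edgesBetweenFinset]
  exact fun ⟨a, ha, b, hb, he⟩ => ⟨a, h ha, b, hb, he⟩

/-- An edge leaving `R` determines the component of `R` it starts from. -/
lemma disjoint_edgesBetweenFinset_of_isCompOf {R C₁ C₂ W : Set V} (hW : Disjoint W R)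
    (h₁ : G.IsCompOf R C₁) (h₂ : G.IsCompOf R C₂) (hne : C₁ ≠ C₂) :
    Disjoint (G.edgesBetweenFinset C₁ W) (G.edgesBetweenFinset C₂ W) := by
  rw [Finset.disjoint_left]
  simp only [mem_edgesBetweenFinset]
  rintro e ⟨x₁, hx₁, y₁, hy₁, he₁⟩ ⟨x₂, hx₂, y₂, hy₂, he₂⟩
  rw [he₁, Sym2.eq_iff] at he₂
  rcases he₂ with ⟨rfl, -⟩ | ⟨rfl, -⟩
  · exact hne (h₁.eq_of_mem h₂ hx₁ hx₂)
  · exact hW.notMem_of_mem_left hy₂ (h₁.subset hx₁)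

lemma sum_edgesBetween_le_card {R W : Set V} (hW : Disjoint W R) {𝒞 : Finset (Set V)}
    (h𝒞 : ∀ C ∈ 𝒞, G.IsCompOf R C) {F : Finset E}
    (hF : ∀ C ∈ 𝒞, G.edgesBetweenFinset C W ⊆ F) :
    ∑ C ∈ 𝒞, G.edgesBetween C W ≤ F.card := by
  simp_rw [← card_edgesBetweenFinset]
  rw [← Finset.card_biUnion fun C₁ hC₁ C₂ hC₂ hne =>
    disjoint_edgesBetweenFinset_of_isCompOf hW (h𝒞 C₁ hC₁) (h𝒞 C₂ hC₂) hne]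
  exact Finset.card_le_card (Finset.biUnion_subset.mpr hF)

lemma sum_edgesBetween_le_edgesBetween {R W : Set V} (hW : Disjoint W R)
    {𝒞 : Finset (Set V)} (h𝒞 : ∀ C ∈ 𝒞, G.IsCompOf R C) :
    ∑ C ∈ 𝒞, G.edgesBetween C W ≤ G.edgesBetween R W := by
  rw [← card_edgesBetweenFinset]
  exact sum_edgesBetween_le_card hW h𝒞 fun C hC =>
    edgesBetweenFinset_mono_left (h𝒞 C hC).subset

lemma edgesBetween_le_degSumAvoid [Fintype V] {A S T : Set V} (hA : Disjoint A S)
    (hT : Disjoint T S) : G.edgesBetween A T ≤ G.degSumAvoid S T := by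
  have hd : G.degSumAvoid S T = ∑ e ∈ (Finset.univ.filter fun e => ∀ u ∈ S, u ∉ G.inc e),
      ∑ v ∈ Finset.univ.filter (· ∈ T), endCount v (G.inc e) := by
    simp only [degSumAvoid, degreeAvoid, ← Finset.sum_filter]
    rw [Finset.sum_comm, Finset.sum_filter]
    simp only [Finset.sum_ite_irrel, Finset.sum_const_zero]
  rw [hd, ← card_edgesBetweenFinset, Finset.card_eq_sum_ones]
  refine (Finset.sum_le_sum fun e he => ?_).trans (Finset.sum_le_sum_of_subset fun e he => ?_)
  · obtain ⟨a, -, b, hb, hab⟩ := mem_edgesBetweenFinset.mp he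
    calc 1 ≤ endCount b (G.inc e) := by simp [hab, endCount]
      _ ≤ _ := Finset.single_le_sum (f := fun v => endCount v (G.inc e))
          (fun _ _ => Nat.zero_le _) (by simpa using hb)
  · obtain ⟨a, ha, b, hb, hab⟩ := mem_edgesBetweenFinset.mp he
    simp only [Finset.mem_filter, Finset.mem_univ, true_and, hab, Sym2.mem_iff]
    rintro u hu (rfl | rfl)
    · exact hA.notMem_of_mem_right hu ha
    · exact hT.notMem_of_mem_right hu hb

end EdgeCounting

section CutEdges

variable {G : Multigraph V E}

lemma Step.mono {A B : Set E} (hAB : A ⊆ B) {x y : V} (h : G.Step B x y) : G.Step A x y :=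
  let ⟨e, he, hxy⟩ := h
  ⟨e, fun heA => he (hAB heA), hxy⟩

lemma isCutEdge_of_forall_ne_mem [Finite V] {C : Set V} {e₀ : E} {x y : V}
    (he₀ : G.inc e₀ = s(x, y)) (hx : x ∈ C) (hy : y ∉ C)
    (hC : ∀ e ≠ e₀, ∀ a b, a ∈ C → G.inc e = s(a, b) → b ∈ C) : G.IsCutEdge e₀ := by
  have hinv : ∀ a b, Relation.EqvGen (G.Step {e₀}) a b → (a ∈ C ↔ b ∈ C) := by
    intro a b h
    induction h with
    | rel a b hab =>
      obtain ⟨e, he, hinc⟩ := hab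
      exact ⟨fun ha => hC e he a b ha hinc, fun hb => hC e he b a hb (hinc.trans Sym2.eq_swap)⟩
    | refl => exact Iff.rfl
    | symm _ _ _ ih => exact ih.symm
    | trans _ _ _ _ _ ih₁ ih₂ => exact ih₁.trans ih₂
  let φ : Quot (G.Step {e₀}) → Quot (G.Step ∅) := Quot.map id fun _ _ => Step.mono (by simp)
  have hφ : ¬ Function.Injective φ := fun hinj =>
    hy ((hinv x y (Quot.eqvGen_exact (hinj (Quot.sound ⟨e₀, id, he₀⟩)))).mp hx)
  have := Fintype.ofFinite (Quot (G.Step ∅))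
  have := Fintype.ofFinite (Quot (G.Step {e₀}))
  rw [IsCutEdge, numComponents, numComponents, Nat.card_eq_fintype_card, Nat.card_eq_fintype_card]
  exact Fintype.card_lt_of_surjective_not_injective φ
    (Quot.map_surjective _ Function.surjective_id) hφ

lemma isCutEdge_of_mem_edgesBetweenFinset [Fintype E] [Finite V] {S T C : Set V}
    (hC : G.IsCompOf (S ∪ T)ᶜ C) (hS : G.edgesBetween C S = 0) (hT : G.edgesBetween C T = 1)
    {e₀ : E} (he₀ : e₀ ∈ G.edgesBetweenFinset C T) : G.IsCutEdge e₀ := by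
  obtain ⟨x, hx, y, hy, hxy⟩ := mem_edgesBetweenFinset.mp he₀
  refine isCutEdge_of_forall_ne_mem hxy hx (fun hyC => hC.subset hyC (Or.inr hy)) ?_
  intro e he a b ha hab
  by_cases hb : b ∈ (S ∪ T)ᶜ
  · exact hC.mem_of_inc ha hab hb
  rcases Set.notMem_compl_iff.mp hb with hbS | hbT
  · rw [← card_edgesBetweenFinset, Finset.card_eq_zero] at hS
    simpa [hS] using (mem_edgesBetweenFinset (G := G)).mpr ⟨a, ha, b, hbS, hab⟩
  · rw [← card_edgesBetweenFinset] at hT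
    exact absurd (Finset.card_le_one.mp hT.le e (mem_edgesBetweenFinset.mpr ⟨a, ha, b, hbT, hab⟩)
      e₀ he₀) he

end CutEdges

theorem three_mul_oddComps_le [Fintype V] [Fintype E] (G : Multigraph V E) {S T : Set V}
    (hST : Disjoint S T) :
    3 * G.oddComps S T
      ≤ 2 * G.edgesBetween (S ∪ T)ᶜ S + 2 * G.cutEdgeCount + G.degSumAvoid S T := by
  set R := (S ∪ T)ᶜ
  set 𝒪 := Finset.univ.filter fun C => G.IsCompOf R C ∧ Odd (G.edgesBetween C T)
  set pendant := 𝒪.filter fun C => G.edgesBetween C S = 0 ∧ G.edgesBetween C T = 1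
  have hR : ∀ C ∈ 𝒪, G.IsCompOf R C := fun C hC => (Finset.mem_filter.mp hC).2.1
  have hSR : Disjoint S R := disjoint_compl_right.mono_left Set.subset_union_left
  have hTR : Disjoint T R := disjoint_compl_right.mono_left Set.subset_union_right
  have hpendant : pendant.card ≤ G.cutEdgeCount :=
    calc pendant.card = ∑ C ∈ pendant, G.edgesBetween C T :=
          Finset.card_eq_sum_ones _ ▸ Finset.sum_congr rfl fun C hC =>
            (Finset.mem_filter.mp hC).2.2.symm
      _ ≤ (Finset.univ.filter G.IsCutEdge).card :=
          sum_edgesBetween_le_card hTR (fun C hC => hR C (Finset.filter_subset _ _ hC))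
            fun C hC e he => Finset.mem_filter.mpr ⟨Finset.mem_univ _,
              isCutEdge_of_mem_edgesBetweenFinset (hR C (Finset.filter_subset _ _ hC))
                (Finset.mem_filter.mp hC).2.1 (Finset.mem_filter.mp hC).2.2 he⟩
      _ = G.cutEdgeCount := by
          rw [cutEdgeCount, Nat.card_eq_fintype_card, Fintype.card_subtype]
  have hodd : G.oddComps S T = 𝒪.card := by
    rw [oddComps, Nat.card_eq_fintype_card, Fintype.card_subtype]
  calc 3 * G.oddComps S T = ∑ C ∈ 𝒪, 3 := by rw [hodd, Finset.sum_const, smul_eq_mul, mul_comm]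
    _ ≤ ∑ C ∈ 𝒪, (2 * G.edgesBetween C S
          + 2 * (if G.edgesBetween C S = 0 ∧ G.edgesBetween C T = 1 then 1 else 0)
          + G.edgesBetween C T) :=
        Finset.sum_le_sum fun C hC => three_le_of_odd (Finset.mem_filter.mp hC).2.2
    _ = 2 * ∑ C ∈ 𝒪, G.edgesBetween C S + 2 * pendant.card + ∑ C ∈ 𝒪, G.edgesBetween C T := by
        rw [Finset.sum_add_distrib, Finset.sum_add_distrib, ← Finset.mul_sum, ← Finset.mul_sum,
          Finset.card_filter]
    _ ≤ 2 * G.edgesBetween R S + 2 * G.cutEdgeCount + G.degSumAvoid S T := by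
        gcongr
        · exact sum_edgesBetween_le_edgesBetween hSR hR
        · exact (sum_edgesBetween_le_edgesBetween hTR hR).trans
            (edgesBetween_le_degSumAvoid hSR.symm hST.symm)

end Multigraph

open Multigraph in
theorem edgesBetween_R_S_lower_bound_general
    {V E : Type} [Fintype V] [Fintype E] (k : ℕ)
    (G : Multigraph V E)
    (S T : Set V) (hST : Disjoint S T)
    (hineq : (G.degSumAvoid S T : ℤ) + (2 * k : ℤ) * ((S.ncard : ℤ) - (T.ncard : ℤ)) + 2
      ≤ (G.oddComps S T : ℤ)) :
    (3 : ℤ) - (G.cutEdgeCount : ℤ) + (G.degSumAvoid S T : ℤ)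
        + (3 * k : ℤ) * ((S.ncard : ℤ) - (T.ncard : ℤ))
      ≤ (G.edgesBetween ((S ∪ T)ᶜ) S : ℤ) := by
  have key : 3 * (G.oddComps S T : ℤ)
      ≤ 2 * G.edgesBetween (S ∪ T)ᶜ S + 2 * G.cutEdgeCount + G.degSumAvoid S T := by
    exact_mod_cast G.three_mul_oddComps_le hST
  linarith

open Multigraph in
/-- If a `(2r+1)`-regular multigraph `G` with `p` cut-edges and disjoint `S, T ⊆ V(G)`,
`R = V(G) − S − T`, satisfy `q(S,T) ≥ d_{G−S}(T) + 2k(|S| − |T|) + 2`, then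
`‖R,S‖ ≥ 3 − p + d_{G−S}(T) + 3k(|S| − |T|)`. -/
theorem edgesBetween_R_S_lower_bound
    {V E : Type} [Fintype V] [Fintype E] (r k : ℕ) (hk : 0 < k)
    (G : Multigraph V E) (hreg : ∀ v : V, G.degree v = 2 * r + 1)
    (S T : Set V) (hST : Disjoint S T)
    (hineq : (G.degSumAvoid S T : ℤ) + (2 * k : ℤ) * ((S.ncard : ℤ) - (T.ncard : ℤ)) + 2
      ≤ (G.oddComps S T : ℤ)) :
    (3 : ℤ) - (G.cutEdgeCount : ℤ) + (G.degSumAvoid S T : ℤ)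
        + (3 * k : ℤ) * ((S.ncard : ℤ) - (T.ncard : ℤ))
      ≤ (G.edgesBetween ((S ∪ T)ᶜ) S : ℤ) :=
  edgesBetween_R_S_lower_bound_general k G S T hST hineq
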